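/- arXiv:1607.03881 — 7 statements merged into one kernel-verified Lean document; each statement's English description precedes it below -/
import Mathlib

section
/- If x ∈ Δ_n (the probability simplex) and g is the migration update rule g(x)_u = x_u + Σ_{v ∈ N_u} x_u x_v F_{uv}(x_u - x_v) with sup_{z∈[-1,1]} |F_{uv}(z)| ≤ 1 for all edges uv, then g(x) ∈ Δ_n; that is, each coordinate of g(x) lies in [0,1] and the coordinates sum to 1. -/
theorem stmt_1 {n : ℕ} (G : SimpleGraph (Fin n)) [DecidableRel G.Adj]
    (F : Fin n → Fin n → ℝ → ℝ)
    (hsym : ∀ u v, F u v = F v u)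
    (hodd : ∀ u v z, F u v (-z) = -(F u v z))
    (h0 : ∀ u v, F u v 0 = 0)
    (hmono : ∀ u v, MonotoneOn (F u v) (Set.Icc (-1 : ℝ) 1))
    (hbound : ∀ u v, ∀ z ∈ Set.Icc (-1 : ℝ) 1, |F u v z| ≤ 1)
    (x : Fin n → ℝ) (hx0 : ∀ v, 0 ≤ x v) (hx1 : ∑ v, x v = 1) :
    (∀ u, 0 ≤ x u + ∑ v ∈ G.neighborFinset u, x u * x v * F u v (x u - x v) ∧
          x u + ∑ v ∈ G.neighborFinset u, x u * x v * F u v (x u - x v) ≤ 1) ∧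
    ∑ u, (x u + ∑ v ∈ G.neighborFinset u, x u * x v * F u v (x u - x v)) = 1 := by
  have hxle : ∀ v, x v ≤ 1 := by
    intro v
    rw [← hx1]
    exact Finset.single_le_sum (fun i _ => hx0 i) (Finset.mem_univ v)
  have hterm : ∀ u v, |x u * x v * F u v (x u - x v)| ≤ x u * x v := by
    intro u v
    have hxy : (0:ℝ) ≤ x u * x v := mul_nonneg (hx0 u) (hx0 v)
    rw [abs_mul, abs_of_nonneg hxy]
    have hF : |F u v (x u - x v)| ≤ 1 :=
      hbound u v _ ⟨by linarith [hx0 u, hxle v], by linarith [hx0 v, hxle u]⟩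
    calc x u * x v * |F u v (x u - x v)| ≤ x u * x v * 1 :=
          mul_le_mul_of_nonneg_left hF hxy
      _ = x u * x v := by ring
  have hS : ∀ u, |∑ v ∈ G.neighborFinset u, x u * x v * F u v (x u - x v)|
      ≤ x u * (1 - x u) := by
    intro u
    calc |∑ v ∈ G.neighborFinset u, x u * x v * F u v (x u - x v)|
        ≤ ∑ v ∈ G.neighborFinset u, |x u * x v * F u v (x u - x v)| :=
          Finset.abs_sum_le_sum_abs _ _
      _ ≤ ∑ v ∈ G.neighborFinset u, x u * x v :=
          Finset.sum_le_sum (fun v _ => hterm u v)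
      _ ≤ ∑ v ∈ Finset.univ.erase u, x u * x v := by
          apply Finset.sum_le_sum_of_subset_of_nonneg
          · intro v hv
            rw [SimpleGraph.mem_neighborFinset] at hv
            exact Finset.mem_erase.2 ⟨hv.ne', Finset.mem_univ v⟩
          · intro v _ _
            exact mul_nonneg (hx0 u) (hx0 v)
      _ = x u * (1 - x u) := by
          rw [← Finset.mul_sum]
          have h := Finset.sum_erase_add Finset.univ x (Finset.mem_univ u)
          rw [hx1] at h
          have : ∑ v ∈ Finset.univ.erase u, x v = 1 - x u := by linarith
          rw [this]
  constructor
  · intro u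
    have h := hS u
    have h1 := abs_le.1 h
    constructor
    · nlinarith [sq_nonneg (x u)]
    · nlinarith [sq_nonneg (1 - x u)]
  · have hrw : ∀ u, ∑ v ∈ G.neighborFinset u, x u * x v * F u v (x u - x v)
        = ∑ v, if G.Adj u v then x u * x v * F u v (x u - x v) else 0 := by
      intro u
      simp [SimpleGraph.neighborFinset_eq_filter, Finset.sum_filter]
    set f : Fin n → Fin n → ℝ :=
      fun u v => if G.Adj u v then x u * x v * F u v (x u - x v) else 0 with hf
    have hanti : ∀ u v, f u v = -(f v u) := by
      intro u v
      by_cases h : G.Adj u v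
      · have h1 : F v u (x v - x u) = -(F u v (x u - x v)) := by
          rw [← hsym u v, show x v - x u = -(x u - x v) by ring, hodd]
        simp only [hf, if_pos h, if_pos h.symm, h1]
        ring
      · simp only [hf, if_neg h, if_neg (fun hh : G.Adj v u => h hh.symm), neg_zero]
    have hT : ∑ u, ∑ v, f u v = 0 := by
      have hc : ∑ u, ∑ v, f u v = ∑ v, ∑ u, f u v := Finset.sum_comm
      have hn : ∑ v, ∑ u, f u v = -∑ v, ∑ u, f v u := by
        simp_rw [← Finset.sum_neg_distrib]
        exact Finset.sum_congr rfl fun v _ => Finset.sum_congr rfl fun u _ => hanti u v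
      have := hc.trans hn
      linarith
    calc ∑ u, (x u + ∑ v ∈ G.neighborFinset u, x u * x v * F u v (x u - x v))
        = ∑ u, x u + ∑ u, ∑ v, f u v := by
          rw [Finset.sum_add_distrib]
          congr 1
          exact Finset.sum_congr rfl fun u _ => hrw u
      _ = 1 := by rw [hx1, hT]; ring
end

section
/- A point p ∈ Δ_n is a fixed point of the migration dynamics g if and only if for every edge uv ∈ E(G), at least one of the following holds: p_u = p_v, p_u = 0, or p_v = 0. -/
theorem stmt_2 {n : ℕ} (G : SimpleGraph (Fin n)) [DecidableRel G.Adj]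
    (F : Fin n → Fin n → ℝ → ℝ)
    (hsym : ∀ u v, F u v = F v u)
    (hodd : ∀ u v z, F u v (-z) = -(F u v z))
    (hmono : ∀ u v, MonotoneOn (F u v) (Set.Icc (-1 : ℝ) 1))
    (hzero : ∀ u v z, F u v z = 0 ↔ z = 0)
    (p : Fin n → ℝ) (hp0 : ∀ v, 0 ≤ p v) (hp1 : ∑ v, p v = 1) :
    (∀ u, p u + ∑ v ∈ G.neighborFinset u, p u * p v * F u v (p u - p v) = p u) ↔
    (∀ u v, G.Adj u v → p u = p v ∨ p u = 0 ∨ p v = 0) := by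
  have hple : ∀ v, p v ≤ 1 := by
    intro v
    rw [← hp1]
    exact Finset.single_le_sum (fun i _ => hp0 i) (Finset.mem_univ v)
  have hF0 : ∀ u v, F u v 0 = 0 := fun u v => (hzero u v 0).mpr rfl
  have hFnn : ∀ u v z, 0 ≤ z → z ≤ 1 → 0 ≤ F u v z := by
    intro u v z hz hz1
    have h0 : (0:ℝ) ∈ Set.Icc (-1:ℝ) 1 := by constructor <;> norm_num
    have hzm : z ∈ Set.Icc (-1:ℝ) 1 := ⟨by linarith, hz1⟩
    have := hmono u v h0 hzm hz
    rwa [hF0] at this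
  have hFpos : ∀ u v z, 0 < z → z ≤ 1 → 0 < F u v z := by
    intro u v z hz hz1
    have hnn := hFnn u v z hz.le hz1
    rcases hnn.lt_or_eq with h | h
    · exact h
    · exact absurd ((hzero u v z).mp h.symm) (ne_of_gt hz)
  constructor
  · intro h u v huv
    by_contra hc
    push_neg at hc
    obtain ⟨hne, hu0, hv0⟩ := hc
    have hsum : ∀ w, ∑ x ∈ G.neighborFinset w, p w * p x * F w x (p w - p x) = 0 := by
      intro w; have := h w; linarith
    set S : Finset (Fin n) :=
      Finset.univ.filter (fun a => ∃ b, G.Adj a b ∧ 0 < p b ∧ p b < p a) with hS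
    have hSne : S.Nonempty := by
      rcases lt_or_gt_of_ne hne with hlt | hgt
      · refine ⟨v, ?_⟩
        simp only [hS, Finset.mem_filter, Finset.mem_univ, true_and]
        exact ⟨u, huv.symm, lt_of_le_of_ne (hp0 u) (Ne.symm hu0), hlt⟩
      · refine ⟨u, ?_⟩
        simp only [hS, Finset.mem_filter, Finset.mem_univ, true_and]
        exact ⟨v, huv, lt_of_le_of_ne (hp0 v) (Ne.symm hv0), hgt⟩
    obtain ⟨a, haS, hamax⟩ := S.exists_max_image p hSne
    simp only [hS, Finset.mem_filter, Finset.mem_univ, true_and] at haS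
    obtain ⟨b, hab, hb0, hba⟩ := haS
    have hapos : 0 < p a := lt_trans hb0 hba
    have hnb : ∀ w ∈ G.neighborFinset a, p w ≤ p a := by
      intro w hw
      rw [SimpleGraph.mem_neighborFinset] at hw
      by_contra hcontra
      push_neg at hcontra
      have hwS : w ∈ S := by
        simp only [hS, Finset.mem_filter, Finset.mem_univ, true_and]
        exact ⟨a, hw.symm, hapos, hcontra⟩
      exact absurd (hamax w hwS) (not_le.mpr hcontra)
    have hpos : 0 < ∑ x ∈ G.neighborFinset a, p a * p x * F a x (p a - p x) := by
      apply Finset.sum_pos'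
      · intro w hw
        have h1 : 0 ≤ p a - p w := by linarith [hnb w hw]
        have h2 : p a - p w ≤ 1 := by
          rw [SimpleGraph.mem_neighborFinset] at hw
          have := hp0 w; have := hple a; linarith
        exact mul_nonneg (mul_nonneg (hp0 a) (hp0 w)) (hFnn a w _ h1 h2)
      · refine ⟨b, ?_, ?_⟩
        · rw [SimpleGraph.mem_neighborFinset]; exact hab
        · have h1 : 0 < p a - p b := by linarith
          have h2 : p a - p b ≤ 1 := by have := hple a; linarith
          exact mul_pos (mul_pos hapos hb0) (hFpos a b _ h1 h2)
    rw [hsum a] at hpos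
    exact lt_irrefl 0 hpos
  · intro h u
    have : ∑ v ∈ G.neighborFinset u, p u * p v * F u v (p u - p v) = 0 := by
      apply Finset.sum_eq_zero
      intro w hw
      rw [SimpleGraph.mem_neighborFinset] at hw
      rcases h u w hw with he | hu0 | hw0
      · rw [he, sub_self, hF0]; ring
      · rw [hu0]; ring
      · rw [hw0]; ring
    rw [this]; ring
end

section
/- Along any trajectory of the migration dynamics, the potential Φ(x) = Σ_v x_v² is non-decreasing: Φ(g(x)) ≥ Φ(x) for all x ∈ Δ_n, with equality if and only if x is a fixed point of g. -/
theorem stmt_4 {n : ℕ} (G : SimpleGraph (Fin n)) [DecidableRel G.Adj]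
    (F : Fin n → Fin n → ℝ → ℝ)
    (hsym : ∀ u v, F u v = F v u)
    (hodd : ∀ u v z, F u v (-z) = -(F u v z))
    (h0 : ∀ u v, F u v 0 = 0)
    (hmono : ∀ u v, StrictMonoOn (F u v) (Set.Icc (-1 : ℝ) 1))
    (hbound : ∀ u v, ∀ z ∈ Set.Icc (-1 : ℝ) 1, |F u v z| ≤ 1)
    (x : Fin n → ℝ) (hx0 : ∀ v, 0 ≤ x v) (hx1 : ∑ v, x v = 1)
    (g : Fin n → ℝ)
    (hg : ∀ u, g u = x u + ∑ v ∈ G.neighborFinset u, x u * x v * F u v (x u - x v)) :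
    (∑ v, x v ^ 2 ≤ ∑ v, g v ^ 2) ∧
    ((∑ v, g v ^ 2 = ∑ v, x v ^ 2) ↔ g = x) := by
  classical
  set d : Fin n → ℝ :=
    fun u => ∑ v ∈ G.neighborFinset u, x u * x v * F u v (x u - x v) with hd
  have hxle1 : ∀ u, x u ≤ 1 := by
    intro u
    calc x u ≤ ∑ v, x v := Finset.single_le_sum (fun v _ => hx0 v) (Finset.mem_univ u)
    _ = 1 := hx1
  have hzF : ∀ u v : Fin n, 0 ≤ (x u - x v) * F u v (x u - x v) := by
    intro u v
    have hzmem : x u - x v ∈ Set.Icc (-1:ℝ) 1 := by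
      constructor
      · linarith [hx0 u, hxle1 v]
      · linarith [hx0 v, hxle1 u]
    have h0mem : (0:ℝ) ∈ Set.Icc (-1:ℝ) 1 := by constructor <;> norm_num
    rcases lt_trichotomy (x u - x v) 0 with h | h | h
    · have := (hmono u v) hzmem h0mem h
      rw [h0 u v] at this
      nlinarith
    · rw [h]; simp
    · have := (hmono u v) h0mem hzmem h
      rw [h0 u v] at this
      nlinarith
  have hnbr : ∀ (u : Fin n) (f : Fin n → ℝ),
      (∑ v ∈ G.neighborFinset u, f v) = ∑ v, if G.Adj u v then f v else 0 := by
    intro u f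
    rw [show G.neighborFinset u = Finset.univ.filter (G.Adj u) by ext; simp,
      Finset.sum_filter]
  set S : ℝ := ∑ u, x u * d u with hS
  have hS1 : S = ∑ u, ∑ v, if G.Adj u v then x u ^ 2 * x v * F u v (x u - x v) else 0 := by
    rw [hS]
    refine Finset.sum_congr rfl fun u _ => ?_
    rw [hd, Finset.mul_sum, hnbr u (fun v => x u * (x u * x v * F u v (x u - x v)))]
    refine Finset.sum_congr rfl fun v _ => ?_
    split <;> ring
  have hS2 : S = ∑ u, ∑ v, if G.Adj u v then -(x v ^ 2 * x u * F u v (x u - x v)) else 0 := by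
    rw [hS1, Finset.sum_comm]
    refine Finset.sum_congr rfl fun u _ => Finset.sum_congr rfl fun v _ => ?_
    have hadj : G.Adj v u ↔ G.Adj u v := G.adj_comm v u
    have hF : F v u (x v - x u) = -(F u v (x u - x v)) := by
      rw [← hsym u v, show x v - x u = -(x u - x v) by ring, hodd]
    simp only [hadj, hF]
    split <;> ring
  have h2S : 2 * S = ∑ u, ∑ v,
      if G.Adj u v then x u * x v * ((x u - x v) * F u v (x u - x v)) else 0 := by
    have : 2 * S = S + S := by ring
    rw [this]
    nth_rewrite 1 [hS1]
    rw [hS2, ← Finset.sum_add_distrib]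
    refine Finset.sum_congr rfl fun u _ => ?_
    rw [← Finset.sum_add_distrib]
    refine Finset.sum_congr rfl fun v _ => ?_
    split <;> ring
  have h2Snn : 0 ≤ 2 * S := by
    rw [h2S]
    refine Finset.sum_nonneg fun u _ => Finset.sum_nonneg fun v _ => ?_
    split
    · exact mul_nonneg (mul_nonneg (hx0 u) (hx0 v)) (hzF u v)
    · exact le_refl 0
  have hSnn : 0 ≤ S := by linarith
  have hd2nn : 0 ≤ ∑ v, d v ^ 2 := Finset.sum_nonneg fun v _ => sq_nonneg _
  have hgsum : ∑ v, g v ^ 2 = ∑ v, x v ^ 2 + 2 * S + ∑ v, d v ^ 2 := by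
    have h1 : ∀ v, g v ^ 2 = x v ^ 2 + 2 * (x v * d v) + d v ^ 2 := by
      intro v; rw [hg v]; ring
    calc ∑ v, g v ^ 2 = ∑ v, (x v ^ 2 + 2 * (x v * d v) + d v ^ 2) :=
          Finset.sum_congr rfl fun v _ => h1 v
      _ = ∑ v, x v ^ 2 + 2 * ∑ v, x v * d v + ∑ v, d v ^ 2 := by
          rw [Finset.sum_add_distrib, Finset.sum_add_distrib, ← Finset.mul_sum]
      _ = ∑ v, x v ^ 2 + 2 * S + ∑ v, d v ^ 2 := by rw [hS]
  constructor
  · linarith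
  · constructor
    · intro heq
      have hdz : ∑ v, d v ^ 2 = 0 := by linarith
      have : ∀ v ∈ Finset.univ, d v ^ 2 = 0 :=
        (Finset.sum_eq_zero_iff_of_nonneg fun v _ => sq_nonneg _).mp hdz
      funext v
      have hv : d v = 0 := by
        have := this v (Finset.mem_univ v)
        exact pow_eq_zero_iff (n := 2) (by norm_num) |>.mp this
      have hv' : ∑ w ∈ G.neighborFinset v, x v * x w * F v w (x v - x w) = 0 := hv
      rw [hg v, hv', add_zero]
    · intro h
      rw [h]
end

section
/- Suppose sup_{z∈[-1,1]}|F_{uv}(z)| < 1/2 for all edges uv. Then for every x ∈ Δ_n the transpose of the Jacobian J of the migration update g at x is strictly column diagonally dominant: for every u, |J_{u,u}| − Σ_{v ≠ u} |J_{v,u}| > 0, where J_{u,u} = 1 + Σ_{v∈N_u} x_v [F_{uv}(x_u − x_v) + x_u F'_{uv}(x_u − x_v)] and J_{u,v} = x_u [F_{uv}(x_u − x_v) − x_v F'_{uv}(x_u − x_v)] for uv ∈ E, J_{u,v} = 0 otherwise. -/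
open Set Filter Topology

lemma deriv_even_of_odd {f f' : ℝ → ℝ} (hd : ∀ z, HasDerivAt f (f' z) z)
    (hodd : ∀ z, f (-z) = -(f z)) (z : ℝ) : f' (-z) = f' z := by
  have h1 : HasDerivAt (f ∘ Neg.neg) (f' (-z) * (-1)) z :=
    (hd (-z)).comp z (hasDerivAt_neg z)
  have h2 : (f ∘ Neg.neg) = fun w => -(f w) := funext fun w => hodd w
  rw [h2] at h1
  have h3 : HasDerivAt (fun w => -(f w)) (-(f' z)) z := (hd z).neg
  have := h1.unique h3
  linarith

lemma deriv_nonneg_of_monotoneOn {f f' : ℝ → ℝ} (hd : ∀ z, HasDerivAt f (f' z) z)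
    (hm : MonotoneOn f (Set.Icc (-1 : ℝ) 1)) {z : ℝ} (hz : z ∈ Set.Icc (-1 : ℝ) 1) :
    0 ≤ f' z := by
  rcases lt_or_eq_of_le hz.2 with hlt | heq
  · -- z < 1 : use right slopes within Ioc z 1
    have hzs : z ∉ Set.Ioc z 1 := fun h => lt_irrefl z h.1
    have ht : Tendsto (slope f z) (𝓝[Set.Ioc z 1] z) (𝓝 (f' z)) :=
      (hasDerivWithinAt_iff_tendsto_slope' hzs).1 ((hd z).hasDerivWithinAt)
    have : NeBot (𝓝[Set.Ioc z 1] z) := left_nhdsWithin_Ioc_neBot hlt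
    refine ge_of_tendsto ht ?_
    filter_upwards [self_mem_nhdsWithin] with y hy
    have hyI : y ∈ Set.Icc (-1 : ℝ) 1 := ⟨le_trans hz.1 hy.1.le, hy.2⟩
    have : f z ≤ f y := hm hz hyI hy.1.le
    have hpos : 0 < y - z := sub_pos.2 hy.1
    rw [slope_def_field]
    exact div_nonneg (by linarith) hpos.le
  · -- z = 1 : use left slopes within Ico (-1) 1
    subst heq
    have hzs : (1 : ℝ) ∉ Set.Ico (-1 : ℝ) 1 := fun h => lt_irrefl 1 h.2
    have ht : Tendsto (slope f 1) (𝓝[Set.Ico (-1 : ℝ) 1] 1) (𝓝 (f' 1)) :=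
      (hasDerivWithinAt_iff_tendsto_slope' hzs).1 ((hd 1).hasDerivWithinAt)
    have : NeBot (𝓝[Set.Ico (-1 : ℝ) 1] (1 : ℝ)) := right_nhdsWithin_Ico_neBot (by norm_num)
    refine ge_of_tendsto ht ?_
    filter_upwards [self_mem_nhdsWithin] with y hy
    have hyI : y ∈ Set.Icc (-1 : ℝ) 1 := ⟨hy.1, hy.2.le⟩
    have : f y ≤ f 1 := hm hyI hz hy.2.le
    have hneg : y - 1 < 0 := sub_neg.2 hy.2
    rw [slope_def_field]
    exact div_nonneg_of_nonpos (by linarith) hneg.le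



theorem stmt_5 {n : ℕ} (G : SimpleGraph (Fin n)) [DecidableRel G.Adj]
    (F F' : Fin n → Fin n → ℝ → ℝ)
    (hderiv : ∀ u v z, HasDerivAt (F u v) (F' u v z) z)
    (hsym : ∀ u v, F u v = F v u)
    (hodd : ∀ u v z, F u v (-z) = -(F u v z))
    (h0 : ∀ u v, F u v 0 = 0)
    (hmono : ∀ u v, MonotoneOn (F u v) (Set.Icc (-1 : ℝ) 1))
    (hbound : ∀ u v, ∀ z ∈ Set.Icc (-1 : ℝ) 1, |F u v z| < 1 / 2)
    (x : Fin n → ℝ) (hx0 : ∀ v, 0 ≤ x v) (hx1 : ∑ v, x v = 1) :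
    ∀ u, (∑ v ∈ Finset.univ.erase u,
        |if G.Adj v u then x v * (F v u (x v - x u) - x u * F' v u (x v - x u)) else 0|)
      < |1 + ∑ v ∈ G.neighborFinset u,
            x v * (F u v (x u - x v) + x u * F' u v (x u - x v))| := by

  intro u
  have hle1 : ∀ v, x v ≤ 1 := by
    intro v
    rw [← hx1]
    exact Finset.single_le_sum (fun i _ => hx0 i) (Finset.mem_univ v)
  have hIcc : ∀ v, x u - x v ∈ Set.Icc (-1 : ℝ) 1 :=
    fun v => ⟨by linarith [hx0 u, hle1 v], by linarith [hx0 v, hle1 u]⟩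
  set s : Fin n → ℝ := fun v => F u v (x u - x v) + x u * F' u v (x u - x v) with hs
  -- derivative symmetry
  have hF'sym : ∀ v z, F' v u z = F' u v z := by
    intro v z
    have h1 : HasDerivAt (F u v) (F' v u z) z := by
      rw [hsym u v]; exact hderiv v u z
    exact h1.unique (hderiv u v z)
  have hF'even : ∀ v z, F' u v (-z) = F' u v z :=
    fun v z => deriv_even_of_odd (hderiv u v) (hodd u v) z
  -- rewrite LHS
  have hterm : ∀ v, (if G.Adj v u then x v * (F v u (x v - x u) - x u * F' v u (x v - x u)) else 0)
      = (if G.Adj v u then -(x v * s v) else 0) := by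
    intro v
    by_cases h : G.Adj v u
    · simp only [h, if_true]
      have e1 : F v u (x v - x u) = -(F u v (x u - x v)) := by
        rw [← hsym u v, show x v - x u = -(x u - x v) by ring, hodd u v]
      have e2 : F' v u (x v - x u) = F' u v (x u - x v) := by
        rw [hF'sym v, show x v - x u = -(x u - x v) by ring, hF'even v]
      rw [e1, e2, hs]; ring
    · simp [h]
  have hLHS : (∑ v ∈ Finset.univ.erase u,
        |if G.Adj v u then x v * (F v u (x v - x u) - x u * F' v u (x v - x u)) else 0|)
      = ∑ v ∈ G.neighborFinset u, x v * |s v| := by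
    have hfil : (Finset.univ.erase u).filter (fun v => G.Adj v u) = G.neighborFinset u := by
      ext v
      simp only [Finset.mem_filter, Finset.mem_erase, Finset.mem_univ, true_and,
        and_true, SimpleGraph.mem_neighborFinset]
      constructor
      · rintro ⟨_, h⟩; exact h.symm
      · intro h; exact ⟨(G.ne_of_adj h).symm, h.symm⟩
    calc (∑ v ∈ Finset.univ.erase u,
          |if G.Adj v u then x v * (F v u (x v - x u) - x u * F' v u (x v - x u)) else 0|)
        = ∑ v ∈ Finset.univ.erase u, (if G.Adj v u then x v * |s v| else 0) := by
          refine Finset.sum_congr rfl fun v _ => ?_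
          rw [hterm v]
          by_cases h : G.Adj v u
          · simp [h, abs_mul, abs_of_nonneg (hx0 v)]
          · simp [h]
      _ = ∑ v ∈ (Finset.univ.erase u).filter (fun v => G.Adj v u), x v * |s v| :=
          (Finset.sum_filter _ _).symm
      _ = ∑ v ∈ G.neighborFinset u, x v * |s v| := by rw [hfil]
  rw [hLHS]
  -- key inequality
  have hd0 : ∀ v, 0 ≤ F' u v (x u - x v) :=
    fun v => deriv_nonneg_of_monotoneOn (hderiv u v) (hmono u v) (hIcc v)
  have key : (∑ v ∈ G.neighborFinset u, x v * |s v|)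
      < 1 + ∑ v ∈ G.neighborFinset u, x v * s v := by
    rcases (G.neighborFinset u).eq_empty_or_nonempty with hN | hN
    · simp [hN]
    · set M : ℝ := (G.neighborFinset u).sup' hN (fun v => |F u v (x u - x v)|) with hM
      have hM2 : M < 1 / 2 :=
        (Finset.sup'_lt_iff hN).mpr fun v _ => hbound u v _ (hIcc v)
      have hM0 : 0 ≤ M := by
        obtain ⟨w, hw⟩ := hN
        exact le_trans (abs_nonneg _) (Finset.le_sup' (fun v => |F u v (x u - x v)|) hw)
      have step1 : ∀ v ∈ G.neighborFinset u, x v * |s v| ≤ x v * s v + x v * (2 * M) := by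
        intro v hv
        have ha : |F u v (x u - x v)| ≤ M := Finset.le_sup' (fun v => |F u v (x u - x v)|) hv
        have hxd : 0 ≤ x u * F' u v (x u - x v) := mul_nonneg (hx0 u) (hd0 v)
        have habs : |s v| ≤ s v + 2 * M := by
          have h1 : -|F u v (x u - x v)| ≤ F u v (x u - x v) := neg_abs_le _
          rcases abs_cases (s v) with ⟨h, _⟩ | ⟨h, _⟩
          · rw [h]; linarith
          · rw [h]; simp only [hs]; simp only [hs] at h; nlinarith
        calc x v * |s v| ≤ x v * (s v + 2 * M) :=
              mul_le_mul_of_nonneg_left habs (hx0 v)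
          _ = x v * s v + x v * (2 * M) := by ring
      have hsum : (∑ v ∈ G.neighborFinset u, x v * |s v|)
          ≤ (∑ v ∈ G.neighborFinset u, x v * s v)
            + (∑ v ∈ G.neighborFinset u, x v) * (2 * M) := by
        calc (∑ v ∈ G.neighborFinset u, x v * |s v|)
            ≤ ∑ v ∈ G.neighborFinset u, (x v * s v + x v * (2 * M)) :=
              Finset.sum_le_sum step1
          _ = _ := by rw [Finset.sum_add_distrib, Finset.sum_mul]
      have hsub : (∑ v ∈ G.neighborFinset u, x v) ≤ 1 := by
        rw [← hx1]
        exact Finset.sum_le_sum_of_subset_of_nonneg (Finset.subset_univ _)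
          (fun i _ _ => hx0 i)
      have hsubnn : 0 ≤ ∑ v ∈ G.neighborFinset u, x v :=
        Finset.sum_nonneg fun i _ => hx0 i
      have h2M : (∑ v ∈ G.neighborFinset u, x v) * (2 * M) ≤ 2 * M :=
        le_trans (mul_le_mul_of_nonneg_right hsub (by linarith))
          (by linarith)
      linarith
  calc (∑ v ∈ G.neighborFinset u, x v * |s v|)
      < 1 + ∑ v ∈ G.neighborFinset u, x v * s v := key
    _ ≤ |1 + ∑ v ∈ G.neighborFinset u, x v * s v| := le_abs_self _
end

section
/- Let p be a fixed point of the migration dynamics such that some connected component C of the subgraph induced by the active types {v : p_v > 0} has |C| > 1 (all types in C have equal positive mass). If F'_{uv}(0) > 0 for all edges uv, then the Jacobian of g at p has an eigenvalue of absolute value strictly greater than 1. -/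
/-!
Rows of the Jacobian indexed by inactive types (`p u = 0`) vanish off the diagonal, so the
spectrum of the block on the active types is part of the spectrum of `J`. On that block the
fixed-point equations cancel the `F`-terms of the diagonal, leaving
`J u u = 1 + ∑ w, p u * p w * F' u w (p u - p w) ≥ 1`, as monotone `F` has `F' ≥ 0`.
An active type of largest mass among those with an active neighbour has a balance sum of
nonnegative terms, which forces an active neighbour `v` of equal mass; the term
`p u ^ 2 * F' u v 0 > 0` then makes the trace of the block exceed its dimension, and a real
matrix with trace larger than its dimension has an eigenvalue outside the unit disc.
-/

open Finset Topology

theorem HasDerivAt.lt_of_monotoneOn_Icc {f : ℝ → ℝ} {f' x z : ℝ} (hd : HasDerivAt f f' x)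
    (hf' : 0 < f') (hm : MonotoneOn f (Set.Icc x z)) (hxz : x < z) : f x < f z := by
  have hslope : ∀ᶠ t in 𝓝[>] x, 0 < slope f x t :=
    ((hasDerivAt_iff_tendsto_slope.mp hd).mono_left (nhdsGT_le_nhdsNE x)).eventually
      (eventually_gt_nhds hf')
  obtain ⟨t, hpos, htx, htz⟩ := (hslope.and (Ioo_mem_nhdsGT hxz)).exists
  calc f x < f t := (slope_pos_iff htx).mp hpos
    _ ≤ f z := hm ⟨htx.le, htz.le⟩ ⟨hxz.le, le_rfl⟩ htz.le

theorem HasDerivAt.nonneg_of_monotoneOn_Icc {f : ℝ → ℝ} {f' a b x : ℝ} (hd : HasDerivAt f f' x)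
    (hm : MonotoneOn f (Set.Icc a b)) (hab : a < b) (hx : x ∈ Set.Icc a b) : 0 ≤ f' :=
  hd.hasDerivWithinAt.nonneg_of_monotoneOn
    (isPreconnected_Icc.preperfect_of_nontrivial
      ⟨a, Set.left_mem_Icc.mpr hab.le, b, Set.right_mem_Icc.mpr hab.le, hab.ne⟩ x hx) hm

namespace Matrix

variable {m : Type*} [Fintype m] [DecidableEq m]

theorem spectrum_toSquareBlockProp_subset {R : Type*} [CommRing R] (M : Matrix m m R)
    (q : m → Prop) [DecidablePred q] (h : ∀ i, ¬q i → ∀ j, q j → M i j = 0) :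
    spectrum R (M.toSquareBlockProp q) ⊆ spectrum R M := by
  intro μ hμ
  rw [spectrum.mem_iff, isUnit_iff_isUnit_det] at hμ ⊢
  have hblock : (algebraMap R _ μ - M).toSquareBlockProp q =
      algebraMap R _ μ - M.toSquareBlockProp q := by
    ext i j
    simp [toSquareBlockProp_def, algebraMap_matrix_apply, Subtype.ext_iff]
  have hlower : ∀ i, ¬q i → ∀ j, q j → (algebraMap R _ μ - M) i j = 0 := fun i hi j hj => by
    have hij : i ≠ j := fun hij => hi (hij ▸ hj)
    simp [algebraMap_matrix_apply, hij, h i hi j hj]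
  rw [twoBlockTriangular_det _ q hlower, hblock, IsUnit.mul_iff]
  exact fun hu => hμ hu.1

theorem exists_mem_spectrum_one_lt_norm_of_card_lt_trace (A : Matrix m m ℝ)
    (h : (Fintype.card m : ℝ) < A.trace) :
    ∃ μ ∈ spectrum ℂ (A.map Complex.ofReal), 1 < ‖μ‖ := by
  set B := A.map Complex.ofReal
  by_contra! hle
  have hroots : ∀ μ ∈ B.charpoly.roots, ‖μ‖ ≤ 1 := fun μ hμ =>
    hle μ (mem_spectrum_iff_isRoot_charpoly.mpr (Polynomial.isRoot_of_mem_roots hμ))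
  have hcard : Multiset.card B.charpoly.roots = Fintype.card m := by
    rw [Polynomial.splits_iff_card_roots.mp (IsAlgClosed.splits B.charpoly),
      charpoly_natDegree_eq_dim]
  have htrace : B.trace = A.trace := by simp [B, trace, Complex.ofReal_sum]
  have : A.trace ≤ Fintype.card m :=
    calc A.trace ≤ ‖B.trace‖ := by rw [htrace, Complex.norm_real]; exact le_abs_self _
      _ = ‖B.charpoly.roots.sum‖ := by rw [trace_eq_sum_roots_charpoly]
      _ ≤ (B.charpoly.roots.map (‖·‖)).sum := norm_multiset_sum_le _
      _ ≤ Multiset.card (B.charpoly.roots.map (‖·‖)) • 1 :=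
        Multiset.sum_le_card_nsmul _ _ (Multiset.forall_mem_map_iff.mpr hroots)
      _ = Fintype.card m := by simp [hcard]
  linarith

theorem exists_mem_spectrum_one_lt_norm_of_one_lt_diag (M : Matrix m m ℝ) (q : m → Prop)
    [DecidablePred q] (hlower : ∀ i, ¬q i → ∀ j, q j → M i j = 0)
    (hdiag : ∀ i, q i → 1 ≤ M i i) (hdiag_lt : ∃ i, q i ∧ 1 < M i i) :
    ∃ μ ∈ spectrum ℂ (M.map Complex.ofReal), 1 < ‖μ‖ := by
  obtain ⟨i₀, hi₀, hlt⟩ := hdiag_lt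
  have htrace : (Fintype.card {i // q i} : ℝ) < (M.toSquareBlockProp q).trace :=
    calc (Fintype.card {i // q i} : ℝ) = ∑ _i : {i // q i}, (1 : ℝ) := by simp
      _ < ∑ i : {i // q i}, M i i :=
        sum_lt_sum (fun i _ => hdiag i i.2) ⟨⟨i₀, hi₀⟩, mem_univ _, hlt⟩
      _ = (M.toSquareBlockProp q).trace := rfl
  obtain ⟨μ, hμ, hμ1⟩ :=
    (M.toSquareBlockProp q).exists_mem_spectrum_one_lt_norm_of_card_lt_trace htrace
  refine ⟨μ, (M.map Complex.ofReal).spectrum_toSquareBlockProp_subset q ?_ hμ, hμ1⟩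
  intro i hi j hj
  simp [hlower i hi j hj]

end Matrix

theorem SimpleGraph.exists_adj_pos_eq_of_balanced {V : Type*} [Fintype V] (G : SimpleGraph V)
    [DecidableRel G.Adj] (f : V → V → ℝ → ℝ) (p : V → ℝ) (hp0 : ∀ v, 0 ≤ p v)
    (hp1 : ∀ v, p v ≤ 1) (hf0 : ∀ u w, f u w 0 = 0)
    (hfpos : ∀ u w z, 0 < z → z ≤ 1 → 0 < f u w z)
    (hbal : ∀ u, 0 < p u → ∑ w ∈ G.neighborFinset u, p w * f u w (p u - p w) = 0)
    (hedge : ∃ u v, G.Adj u v ∧ 0 < p u ∧ 0 < p v) :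
    ∃ u v, G.Adj u v ∧ 0 < p u ∧ 0 < p v ∧ p u = p v := by
  have hfnn : ∀ u w z, 0 ≤ z → z ≤ 1 → 0 ≤ f u w z := fun u w z hz hz1 => by
    rcases hz.eq_or_lt with rfl | hz
    · exact (hf0 u w).ge
    · exact (hfpos u w z hz hz1).le
  set T := univ.filter fun u => 0 < p u ∧ ∃ v, G.Adj u v ∧ 0 < p v
  obtain ⟨a, c, hac, ha, hc⟩ := hedge
  obtain ⟨u, huT, hmax⟩ := T.exists_max_image p ⟨a, by simpa [T] using ⟨ha, c, hac, hc⟩⟩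
  obtain ⟨hu, v, huv, hv⟩ := (mem_filter.mp huT).2
  have hle : ∀ w, G.Adj u w → 0 < p w → p w ≤ p u := fun w huw hw =>
    hmax w (by simpa [T] using ⟨hw, u, huw.symm, hu⟩)
  have hterm : ∀ w ∈ G.neighborFinset u, 0 ≤ p w * f u w (p u - p w) := by
    intro w hw
    rw [G.mem_neighborFinset] at hw
    rcases (hp0 w).eq_or_lt with hw0 | hw0
    · simp [← hw0]
    · exact mul_nonneg hw0.le
        (hfnn u w _ (sub_nonneg.mpr (hle w hw hw0)) (by linarith [hp1 u, hp0 w]))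
  have hzero := (sum_eq_zero_iff_of_nonneg hterm).mp (hbal u hu) v
    ((G.mem_neighborFinset u v).mpr huv)
  have hfuv : f u v (p u - p v) = 0 := (mul_eq_zero.mp hzero).resolve_left hv.ne'
  refine ⟨u, v, huv, hu, hv, ?_⟩
  by_contra hne
  have hlt : 0 < p u - p v := sub_pos.mpr ((hle v huv hv).lt_of_ne' hne)
  exact (hfpos u v _ hlt (by linarith [hp1 u, hp0 v])).ne' hfuv

theorem stmt_7_general {n : ℕ} (G : SimpleGraph (Fin n)) [DecidableRel G.Adj]
    (F F' : Fin n → Fin n → ℝ → ℝ)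
    (hderiv : ∀ u v z, HasDerivAt (F u v) (F' u v z) z)
    (h0 : ∀ u v, F u v 0 = 0)
    (hmono : ∀ u v, MonotoneOn (F u v) (Set.Icc (-1 : ℝ) 1))
    (hF'0 : ∀ u v, 0 < F' u v 0)
    (p : Fin n → ℝ) (hp0 : ∀ v, 0 ≤ p v) (hp1 : ∑ v, p v = 1)
    (hfix : ∀ u, p u + ∑ v ∈ G.neighborFinset u, p u * p v * F u v (p u - p v) = p u)
    (hedge : ∃ u v, G.Adj u v ∧ 0 < p u ∧ 0 < p v)
    (J : Matrix (Fin n) (Fin n) ℝ)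
    (hJ : ∀ u v, J u v =
      if u = v then
        1 + ∑ w ∈ G.neighborFinset u, p w * (F u w (p u - p w) + p u * F' u w (p u - p w))
      else if G.Adj u v then
        p u * (F u v (p u - p v) - p v * F' u v (p u - p v))
      else 0) :
    ∃ μ : ℂ, μ ∈ spectrum ℂ (J.map (Complex.ofReal)) ∧ 1 < ‖μ‖ := by
  have hp_le_one : ∀ u, p u ≤ 1 := fun u => hp1 ▸ single_le_sum (fun v _ => hp0 v) (mem_univ u)
  have hFpos : ∀ u w z, 0 < z → z ≤ 1 → 0 < F u w z := fun u w z hz hz1 =>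
    h0 u w ▸ (hderiv u w 0).lt_of_monotoneOn_Icc (hF'0 u w)
      ((hmono u w).mono (Set.Icc_subset_Icc (by norm_num) hz1)) hz
  have hF'nn : ∀ u w, 0 ≤ p u * p w * F' u w (p u - p w) := fun u w =>
    mul_nonneg (mul_nonneg (hp0 u) (hp0 w)) ((hderiv u w _).nonneg_of_monotoneOn_Icc (hmono u w)
      (by norm_num) ⟨by linarith [hp0 u, hp_le_one w], by linarith [hp0 w, hp_le_one u]⟩)
  have hbal : ∀ u, 0 < p u → ∑ w ∈ G.neighborFinset u, p w * F u w (p u - p w) = 0 := by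
    intro u hu
    have := hfix u
    simp_rw [mul_assoc, ← mul_sum] at this
    exact (mul_eq_zero.mp (by linarith)).resolve_left hu.ne'
  obtain ⟨u₀, v₀, hadj, hu₀, hv₀, heq⟩ :=
    G.exists_adj_pos_eq_of_balanced F p hp0 hp_le_one h0 hFpos hbal hedge
  have hdiag : ∀ u, 0 < p u →
      J u u = 1 + ∑ w ∈ G.neighborFinset u, p u * p w * F' u w (p u - p w) := by
    intro u hu
    rw [hJ, if_pos rfl, add_right_inj]
    simp_rw [mul_add, sum_add_distrib, hbal u hu, zero_add]
    exact sum_congr rfl fun w _ => by ring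
  refine J.exists_mem_spectrum_one_lt_norm_of_one_lt_diag (0 < p ·) ?_
    (fun u hu => (hdiag u hu).symm ▸ le_add_of_nonneg_right (sum_nonneg fun w _ => hF'nn u w))
    ⟨u₀, hu₀, ?_⟩
  · intro i hi j hj
    have hij : i ≠ j := fun h => hi (h ▸ hj)
    simp [hJ, hij, le_antisymm (not_lt.mp hi) (hp0 i)]
  · rw [hdiag u₀ hu₀]
    refine lt_add_of_pos_right _ (sum_pos' (fun w _ => hF'nn u₀ w) ⟨v₀, ?_, ?_⟩)
    · exact (G.mem_neighborFinset u₀ v₀).mpr hadj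
    · rw [heq, sub_self]
      exact mul_pos (mul_pos hv₀ hv₀) (hF'0 u₀ v₀)

theorem stmt_7 {n : ℕ} (G : SimpleGraph (Fin n)) [DecidableRel G.Adj]
    (F F' : Fin n → Fin n → ℝ → ℝ)
    (hderiv : ∀ u v z, HasDerivAt (F u v) (F' u v z) z)
    (hsym : ∀ u v, F u v = F v u)
    (hodd : ∀ u v z, F u v (-z) = -(F u v z))
    (h0 : ∀ u v, F u v 0 = 0)
    (hmono : ∀ u v, MonotoneOn (F u v) (Set.Icc (-1 : ℝ) 1))
    (hF'0 : ∀ u v, 0 < F' u v 0)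
    (p : Fin n → ℝ) (hp0 : ∀ v, 0 ≤ p v) (hp1 : ∑ v, p v = 1)
    (hfix : ∀ u, p u + ∑ v ∈ G.neighborFinset u, p u * p v * F u v (p u - p v) = p u)
    (hedge : ∃ u v, G.Adj u v ∧ 0 < p u ∧ 0 < p v)
    (J : Matrix (Fin n) (Fin n) ℝ)
    (hJ : ∀ u v, J u v =
      if u = v then
        1 + ∑ w ∈ G.neighborFinset u, p w * (F u w (p u - p w) + p u * F' u w (p u - p w))
      else if G.Adj u v then
        p u * (F u v (p u - p v) - p v * F' u v (p u - p v))
      else 0) :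
    ∃ μ : ℂ, μ ∈ spectrum ℂ (J.map (Complex.ofReal)) ∧ 1 < ‖μ‖ :=
  stmt_7_general G F F' hderiv h0 hmono hF'0 p hp0 hp1 hfix hedge J hJ
end

section
/- If at step t there exist neighboring types u,v with x_v ≥ ε, x_u − x_v ≥ δ, and mass d = x_u x_v F_{vu}(x_u − x_v) moves from v to u, then d ≥ α_min ε δ² and the increase in the potential Φ(x) = Σ_w x_w² due to this movement is at least 2 α_min ε δ³. -/
theorem stmt_13 (αmin ε δ : ℝ) (hα : 0 < αmin) (hε : 0 < ε) (hδ : 0 < δ)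
    (F : ℝ → ℝ) (hF : ∀ z, 0 ≤ z → αmin * z ≤ F z)
    (xu xv : ℝ) (hxv0 : 0 ≤ xv) (hxvε : ε ≤ xv) (hgap : δ ≤ xu - xv)
    (d : ℝ) (hd : d = xu * xv * F (xu - xv)) :
    αmin * ε * δ ^ 2 ≤ d ∧
    2 * αmin * ε * δ ^ 3 ≤ 2 * d * (xu - xv) + 2 * d ^ 2 := by
  have h1 : αmin * (xu - xv) ≤ F (xu - xv) := hF _ (by linarith)
  have hF2 : αmin * δ ≤ F (xu - xv) := le_trans (by nlinarith) h1
  have hxu : δ ≤ xu := by linarith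
  have hd1 : αmin * ε * δ ^ 2 ≤ d := by
    subst hd
    calc αmin * ε * δ ^ 2 = (δ * ε) * (αmin * δ) := by ring
    _ ≤ (xu * xv) * F (xu - xv) := by
        apply mul_le_mul (mul_le_mul hxu hxvε hε.le (by linarith)) hF2 (by positivity)
          (mul_nonneg (by linarith) hxv0)
  refine ⟨hd1, ?_⟩
  have hd0 : 0 ≤ d := le_trans (by positivity) hd1
  nlinarith [sq_nonneg d, mul_le_mul hd1 hgap hδ.le hd0]
end

section
/- Let a sequence x_0, x_1, x_2, … of nonnegative reals satisfy x_0 ≤ 8/k and x_{t+1} ≤ x_t + 2k α (x_t)³, where k ≥ 1024 α T for some horizon T. Then for all t ≤ T, x_t ≤ 8/k + 16 α k t (8/k)³. -/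
theorem stmt_17 (α k : ℝ) (T : ℕ) (hα : 0 < α) (hk : 0 < k)
    (hkT : 1024 * α * (T : ℝ) ≤ k)
    (x : ℕ → ℝ) (hxnn : ∀ t, 0 ≤ x t)
    (hx0 : x 0 ≤ 8 / k)
    (hrec : ∀ t, x (t + 1) ≤ x t + 2 * k * α * (x t) ^ 3) :
    ∀ t ≤ T, x t ≤ 8 / k + 16 * α * k * (t : ℝ) * (8 / k) ^ 3 := by
  intro t
  induction t with
  | zero => intro _; simpa using hx0
  | succ t ih =>
    intro hT
    have ht : t ≤ T := Nat.le_of_succ_le hT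
    have h1 := ih ht
    have htT : (t : ℝ) ≤ (T : ℝ) := Nat.cast_le.mpr ht
    have h1024 : 1024 * α * (t : ℝ) ≤ k := le_trans (by nlinarith) hkT
    have htnn : (0:ℝ) ≤ (t : ℝ) := Nat.cast_nonneg t
    have keq : 16 * α * k * (t : ℝ) * (8 / k) ^ 3 = 8192 * α * (t : ℝ) / k ^ 2 := by
      field_simp; ring
    have key : 16 * α * k * (t : ℝ) * (8 / k) ^ 3 ≤ 8 / k := by
      rw [keq, div_le_div_iff₀ (by positivity) hk]
      nlinarith
    have hx : x t ≤ 16 / k := by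
      have : 8 / k + 8 / k = 16 / k := by ring
      linarith
    have hc : (x t) ^ 3 ≤ (16 / k) ^ 3 := pow_le_pow_left₀ (hxnn t) hx 3
    have hstep : 2 * k * α * (x t) ^ 3 ≤ 16 * α * k * (8 / k) ^ 3 := by
      have h2 := mul_le_mul_of_nonneg_left hc (by positivity : (0:ℝ) ≤ 2 * k * α)
      have : 2 * k * α * (16 / k) ^ 3 = 16 * α * k * (8 / k) ^ 3 := by
        field_simp; ring
      linarith
    have := hrec t
    push_cast
    nlinarith [h1, hstep, this]
end
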